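/- Let λ = (λ₁ ≥ ⋯ ≥ λ_r > 0) be a partition of length r ≥ 1 with flagging f = (f₁ ≤ ⋯ ≤ f_r). Assume λ₁ > λ₂ and f₁ < f₂, where by convention λ₂ = 0 and the condition f₁ < f₂ is vacuous when r = 1. Set λ' = (λ₁−1, λ₂, …, λ_r) (regarded as a partition, discarding a trailing zero when λ₁ = 1, in which case r = 1 and λ' is the empty partition) and f' = (f₁+1, f₂, …, f_r). Then π_{f₁}(G̃_{λ,f}) = G̃_{λ',f'}. -/

import Mathlib

/- Common setup: `R = ℤ[β][[x₀,x₁,x₂,…]]` with `β = Polynomial.X`; only the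
variables `x i` for `i ≥ 1` are used in the statements. -/

attribute [local instance] Classical.propDecidable

noncomputable section

abbrev A : Type := Polynomial ℤ
abbrev R : Type := MvPowerSeries ℕ A

/-- the element β -/
def bR : R := MvPowerSeries.C (σ := ℕ) (R := A) Polynomial.X

/-- the variable `x i` -/
def Xv (i : ℕ) : R := MvPowerSeries.X i

/-- total degree of a monomial -/
def degSum (d : ℕ →₀ ℕ) : ℕ := d.sum fun _ n => n

/-- the ring automorphism `s i` exchanging `x i` and `x (i+1)` -/
def sOp (i : ℕ) (f : R) : R := fun d => f (Finsupp.equivMapDomain (Equiv.swap i (i+1)) d)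

/-- the divided difference operator `π i`, characterized by
`(x i - x (i+1)) * π i f = (1 + β x (i+1)) f - (1 + β x i) (s i f)`. -/
def ddiff (i : ℕ) (f : R) : R :=
  Classical.epsilon fun gq : R =>
    (Xv i - Xv (i+1)) * gq = (1 + bR * Xv (i+1)) * f - (1 + bR * Xv i) * sOp i f

/-- complete homogeneous symmetric function of degree `j` in the variables `x_q, …, x_p` -/
def hsym (q p : ℕ) (j : ℤ) : R := fun d =>
  if (∀ k ∈ d.support, q ≤ k ∧ k ≤ p) ∧ (degSum d : ℤ) = j then 1 else 0

/-- `∏_{i=q}^{p} (1 + β x_i)` -/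
def prodOneAdd (q p : ℕ) : R := ∏ i ∈ Finset.Icc q p, (1 + bR * Xv i)

/-- `G_m^{[p/q]} = Σ_{s≥0} (−β)^s (∏_{i=q}^p (1+βx_i)) h_{m+s}(x_q,…,x_p)`,
defined coefficientwise (only the terms with `m + s ≤ deg d` can contribute to the
coefficient at a monomial `d`). -/
def Gsk (p q : ℕ) (m : ℤ) : R := fun d =>
  ∑ s ∈ Finset.range (((degSum d : ℤ) - m).toNat + 1),
    (-Polynomial.X : A) ^ s * MvPowerSeries.coeff (R := A) d (prodOneAdd q p * hsym q p (m + s))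

/-- `G_m^{[p]} = G_m^{[p/1]}` -/
def Gk (p : ℕ) (m : ℤ) : R := Gsk p 1 m

/-- the geometric series `Σ_{s≥0} (−β x_i)^s = 1/(1+βx_i)` -/
def geom (i : ℕ) : R := fun d =>
  if d.support ⊆ {i} then (-Polynomial.X : A) ^ (d i) else 0

/-- substitution of `x₁ = 0` -/
def setX1Zero (f : R) : R := fun d => if d 1 = 0 then f d else 0

/-- generalized binomial coefficient `C(c,s) = c(c−1)⋯(c−s+1)/s!` for `c : ℤ` -/
def intChoose (c : ℤ) (s : ℕ) : ℤ :=
  if 0 ≤ c then (c.toNat.choose s : ℤ) else (-1) ^ s * (((s : ℤ) - 1 - c).toNat.choose s : ℤ)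

/-- `Σ_{s≥0} C(c,s) β^s G_{m+s}^{[p/q]}`, defined coefficientwise. -/
def JT (p q : ℕ) (c m : ℤ) : R := fun d =>
  ∑ s ∈ Finset.range (((degSum d : ℤ) - m).toNat + 1),
    ((intChoose c s : ℤ) : A) * Polynomial.X ^ s * MvPowerSeries.coeff (R := A) d (Gsk p q (m + s))

/-- the Jacobi–Trudi type determinant `G̃_{λ/μ,f/g}` (rows and columns indexed by
`Fin r`, with `i : Fin r` representing the 1-based index `i+1`). -/
def GtildeSkew (r : ℕ) (lam mu f g : Fin r → ℕ) : R :=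
  Matrix.det (Matrix.of fun i j : Fin r =>
    JT (f i) (g j) ((i : ℤ) - (j : ℤ))
      ((lam i : ℤ) - (mu j : ℤ) + (j : ℤ) - (i : ℤ)))

/-- the Jacobi–Trudi type determinant `G̃_{λ,f}` -/
def Gtilde (r : ℕ) (lam f : Fin r → ℕ) : R :=
  GtildeSkew r lam (fun _ => 0) f (fun _ => 1)

/-- flagged skew set-valued tableaux of shape `λ/μ` with flagging `f/g`:
a tableau assigns to the box in row `i` (1-based index `i+1`), column `j`
(with `μᵢ < j ≤ λᵢ`) a nonempty subset of `{gᵢ,…,fᵢ}`, weakly increasing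
along rows and strictly increasing along columns; boxes outside the shape
carry `∅`. -/
def IsFSVT (r : ℕ) (lam mu f g : Fin r → ℕ) (T : Fin r × ℕ → Finset ℕ) : Prop :=
  (∀ (i : Fin r) (j : ℕ), ¬ (mu i < j ∧ j ≤ lam i) → T (i, j) = ∅) ∧
  (∀ (i : Fin r) (j : ℕ), mu i < j → j ≤ lam i → (T (i, j)).Nonempty) ∧
  (∀ (i : Fin r) (j k : ℕ), k ∈ T (i, j) → g i ≤ k ∧ k ≤ f i) ∧
  (∀ (i : Fin r) (j : ℕ), mu i < j → j + 1 ≤ lam i →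
     ∀ a ∈ T (i, j), ∀ b ∈ T (i, j + 1), a ≤ b) ∧
  (∀ (i : Fin r) (h : (i : ℕ) + 1 < r) (j : ℕ),
     mu i < j → j ≤ lam i → mu ⟨(i : ℕ) + 1, h⟩ < j → j ≤ lam ⟨(i : ℕ) + 1, h⟩ →
     ∀ a ∈ T (i, j), ∀ b ∈ T (⟨(i : ℕ) + 1, h⟩, j), a < b)

/-- the total number `|T|` of entries of a tableau -/
def entriesCount (r : ℕ) (lam mu : Fin r → ℕ) (T : Fin r × ℕ → Finset ℕ) : ℕ :=
  ∑ i : Fin r, ∑ j ∈ Finset.Ioc (mu i) (lam i), (T (i, j)).card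

/-- `|λ/μ|` -/
def shapeSize (r : ℕ) (lam mu : Fin r → ℕ) : ℕ := ∑ i : Fin r, (lam i - mu i)

/-- the weight `β^{|T|−|λ/μ|} ∏_{k∈T} x_k` of a tableau -/
def wt (r : ℕ) (lam mu : Fin r → ℕ) (T : Fin r × ℕ → Finset ℕ) : R :=
  bR ^ (entriesCount r lam mu T - shapeSize r lam mu) *
    ∏ i : Fin r, ∏ j ∈ Finset.Ioc (mu i) (lam i), ∏ k ∈ T (i, j), Xv k

/-- the flagged skew Grothendieck polynomial `G_{λ/μ,f/g}` as the (finite) sum of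
the weights of all flagged skew set-valued tableaux -/
def GF (r : ℕ) (lam mu f g : Fin r → ℕ) : R :=
  ∑ᶠ (T : Fin r × ℕ → Finset ℕ) (_ : IsFSVT r lam mu f g T), wt r lam mu T

/- permutations: `w ∈ S_n` is encoded as a permutation of `ℕ` fixing `0` and
everything `> n`. -/

/-- `w` belongs to `S_n` -/
def isSn (n : ℕ) (w : Equiv.Perm ℕ) : Prop := ∀ k, k = 0 ∨ n < k → w k = k

/-- Coxeter length = number of inversions -/
def len (n : ℕ) (w : Equiv.Perm ℕ) : ℕ :=
  (((Finset.Icc 1 n) ×ˢ (Finset.Icc 1 n)).filter fun pr : ℕ × ℕ =>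
    pr.1 < pr.2 ∧ w pr.2 < w pr.1).card

/-- the rank function `r_w(p,q) = #{i ≤ p : w(i) ≤ q}` -/
def rankf (w : Equiv.Perm ℕ) (p q : ℕ) : ℕ :=
  ((Finset.Icc 1 p).filter fun i => w i ≤ q).card

/-- the diagram `D(w)` -/
def inD (n : ℕ) (w : Equiv.Perm ℕ) (p q : ℕ) : Prop :=
  1 ≤ p ∧ p ≤ n ∧ 1 ≤ q ∧ q ≤ n ∧ q < w p ∧ p < w.symm q

/-- the essential set `Ess(w)` -/
def inEss (n : ℕ) (w : Equiv.Perm ℕ) (p q : ℕ) : Prop :=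
  inD n w p q ∧ ¬ inD n w (p+1) q ∧ ¬ inD n w p (q+1)

/-- `w ∈ S_n` is vexillary: it avoids the pattern 2143 -/
def Vexillary (n : ℕ) (w : Equiv.Perm ℕ) : Prop :=
  ¬ ∃ a b c d : ℕ, 1 ≤ a ∧ a < b ∧ b < c ∧ c < d ∧ d ≤ n ∧
      w b < w a ∧ w a < w d ∧ w d < w c

/- The numerator `ddiffNum p F = (1 + β x_{p+1}) F - (1 + β x_p) s_p F` of `π_p` is additive,
continuous for the coefficientwise topology, and satisfies `ddiffNum p (a F) = a · ddiffNum p F`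
for `s_p`-invariant `a`. Every row of the Jacobi–Trudi matrix below the first has flag `> f₁ = p`,
so its entries are symmetric in `x_p, x_{p+1}` and `π_p` acts on the determinant through the first
row alone. Expanding `G` and `JT` as convergent series reduces the first-row identity
`π_p JT^{[p]}_m = JT^{[p+1]}_{m-1}` to `π_p (∏_{i≤p} (1 + β x_i) h_m(x_1..x_p))
= ∏_{i≤p+1} (1 + β x_i) h_{m-1}(x_1..x_{p+1})`, which is the classical identity
`(x_p - x_{p+1}) h_{m-1}(x_1..x_{p+1}) = h_m(x_1..x_p) - s_p h_m(x_1..x_p)`: subtract the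
recursion `h_m(x_1..x_{p+1}) = h_m(x_1..x_p) + x_{p+1} h_{m-1}(x_1..x_{p+1})` from its `s_p`-image. -/

open MvPowerSeries Finsupp
open scoped MvPowerSeries.WithPiTopology

lemma swap_succ_apply_mem_Icc {q p i : ℕ} (hq : q ≤ i) (hp : i + 1 ≤ p) (k : ℕ) :
    Equiv.swap i (i+1) k ∈ Finset.Icc q p ↔ k ∈ Finset.Icc q p := by
  simp only [Finset.mem_Icc, Equiv.swap_apply_def]
  split_ifs <;> omega

lemma degSum_sub_single {d : ℕ →₀ ℕ} {i : ℕ} (h : d i ≠ 0) :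
    (degSum (d - single i 1) : ℤ) = degSum d - 1 := by
  have hle : single i 1 ≤ d := single_le_iff.mpr (Nat.one_le_iff_ne_zero.mpr h)
  have := congrArg degree (tsub_add_cancel_of_le hle)
  rw [map_add, degree_single] at this
  change ((degree (d - single i 1) : ℕ) : ℤ) = ((degree d : ℕ) : ℤ) - 1
  omega

lemma coeff_Xv_mul (i : ℕ) (F : R) (d : ℕ →₀ ℕ) :
    coeff d (Xv i * F) = if d i = 0 then 0 else coeff (d - single i 1) F := by
  rw [Xv, X, coeff_monomial_mul, one_mul]
  by_cases h : d i = 0 <;> simp [h, single_le_iff, Nat.one_le_iff_ne_zero]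

lemma coeff_hsym (q p : ℕ) (j : ℤ) (d : ℕ →₀ ℕ) :
    coeff d (hsym q p j) = if (∀ k ∈ d.support, k ∈ Finset.Icc q p) ∧ (degSum d : ℤ) = j
      then 1 else 0 := by
  simp only [Finset.mem_Icc]; rfl

lemma hsym_succ {q p : ℕ} (hq : q ≤ p + 1) (m : ℤ) :
    hsym q (p+1) m = hsym q p m + Xv (p+1) * hsym q (p+1) (m-1) := by
  refine MvPowerSeries.ext fun d => ?_
  rw [map_add, coeff_Xv_mul, coeff_hsym, coeff_hsym]
  simp only [Finsupp.mem_support_iff, Finset.mem_Icc]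
  by_cases hd : d (p+1) = 0
  · rw [if_pos hd, add_zero]
    refine if_congr (and_congr_left fun _ => forall_congr' fun k => imp_congr_right fun hk => ?_)
      rfl rfl
    have : k ≠ p + 1 := fun h => hk (h ▸ hd)
    omega
  · have hp : ¬ ∀ k, d k ≠ 0 → q ≤ k ∧ k ≤ p := fun h => by have := h _ hd; omega
    rw [if_neg hd, coeff_hsym, degSum_sub_single hd]
    simp only [sub_left_inj, hp, false_and, if_false, zero_add, Finsupp.mem_support_iff,
      Finset.mem_Icc, Finsupp.tsub_apply, Finsupp.single_apply]
    refine if_congr (and_congr_left fun _ => forall_congr' fun k => ?_) rfl rfl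
    by_cases hk : p + 1 = k
    · subst hk
      exact ⟨fun _ _ => ⟨hq, le_rfl⟩, fun _ _ => ⟨hq, le_rfl⟩⟩
    · rw [if_neg hk, Nat.sub_zero]

lemma sOp_eq_rename (i : ℕ) (F : R) : sOp i F = rename (Equiv.swap i (i+1)) F := by
  refine MvPowerSeries.ext fun d => ?_
  set e := Equiv.swap i (i+1)
  have h : embDomain e.toEmbedding (equivMapDomain e d) = d := by
    ext k; simp [e, embDomain_eq_mapDomain, equivMapDomain_eq_mapDomain, Equiv.swap_apply_self]
  have := coeff_embDomain_rename (R := A) e.toEmbedding F (equivMapDomain e d)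
  rw [h] at this
  exact this.symm

lemma sOp_add (i : ℕ) (F G : R) : sOp i (F + G) = sOp i F + sOp i G := rfl

lemma sOp_mul (i : ℕ) (F G : R) : sOp i (F * G) = sOp i F * sOp i G := by
  simp only [sOp_eq_rename, map_mul]

lemma sOp_C (i : ℕ) (a : A) : sOp i (C a) = C a := by
  rw [sOp_eq_rename, rename_C]

lemma sOp_Xv (i j : ℕ) : sOp i (Xv j) = Xv (Equiv.swap i (i+1) j) := by
  rw [sOp_eq_rename, Xv, rename_X]
  rfl

lemma sOp_oneAdd (i j : ℕ) : sOp i (1 + bR * Xv j) = 1 + bR * Xv (Equiv.swap i (i+1) j) := by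
  rw [sOp_add, sOp_mul, sOp_Xv, bR, sOp_C, sOp_eq_rename, map_one]

section Invariance

variable {q p i : ℕ}

lemma sOp_prodOneAdd (hq : q ≤ i) (hp : i + 1 ≤ p) : sOp i (prodOneAdd q p) = prodOneAdd q p := by
  rw [sOp_eq_rename, prodOneAdd, map_prod]
  refine Finset.prod_equiv (Equiv.swap i (i+1)) (fun k => (swap_succ_apply_mem_Icc hq hp k).symm)
    fun k _ => ?_
  rw [← sOp_eq_rename, sOp_oneAdd]

lemma sOp_hsym (hq : q ≤ i) (hp : i + 1 ≤ p) (j : ℤ) : sOp i (hsym q p j) = hsym q p j := by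
  refine MvPowerSeries.ext fun d => ?_
  set e := Equiv.swap i (i+1)
  have hsupp : (equivMapDomain e d).support = d.support.map e.toEmbedding := rfl
  have hdeg : degSum (equivMapDomain e d) = degSum d := sum_equivMapDomain _ _ _
  change coeff (equivMapDomain e d) (hsym q p j) = _
  rw [coeff_hsym, coeff_hsym, hsupp, hdeg]
  simp only [Finset.forall_mem_map, Equiv.toEmbedding_apply, e, swap_succ_apply_mem_Icc hq hp]

end Invariance

lemma mul_sub_hsym {q p : ℕ} (hq : q ≤ p) (m : ℤ) :
    (Xv p - Xv (p+1)) * hsym q (p+1) (m-1) = hsym q p m - sOp p (hsym q p m) := by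
  have hrec := hsym_succ (q := q) (p := p) (by omega) m
  have hswapped := congrArg (sOp p) hrec
  rw [sOp_hsym hq le_rfl, sOp_add, sOp_mul, sOp_hsym hq le_rfl, sOp_Xv,
    Equiv.swap_apply_right] at hswapped
  linear_combination hrec - hswapped

def ddiffNum (i : ℕ) (F : R) : R := (1 + bR * Xv (i+1)) * F - (1 + bR * Xv i) * sOp i F

lemma ddiff_eq_of_mul_eq {i : ℕ} {F G : R} (h : (Xv i - Xv (i+1)) * G = ddiffNum i F) :
    ddiff i F = G := by
  have hne : Xv i - Xv (i+1) ≠ 0 := sub_ne_zero.mpr fun h => by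
    simpa using (X_inj (R := A)).mp h
  exact mul_left_cancel₀ hne
    ((Classical.epsilon_spec (p := fun G => _ = ddiffNum i F) ⟨G, h⟩).trans h.symm)

lemma ddiffNum_mul_of_sOp_eq {i : ℕ} {a : R} (ha : sOp i a = a) (F : R) :
    ddiffNum i (a * F) = a * ddiffNum i F := by
  rw [ddiffNum, ddiffNum, sOp_mul, ha]
  ring

lemma ddiffNum_prodOneAdd_mul_hsym {q p : ℕ} (hq : q ≤ p) (m : ℤ) :
    ddiffNum p (prodOneAdd q p * hsym q p m)
      = (Xv p - Xv (p+1)) * (prodOneAdd q (p+1) * hsym q (p+1) (m-1)) := by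
  have hsucc : prodOneAdd q (p+1) = prodOneAdd q p * (1 + bR * Xv (p+1)) :=
    Finset.prod_Icc_succ_top (by omega) _
  have hswapped : (1 + bR * Xv p) * sOp p (prodOneAdd q p) = prodOneAdd q (p+1) := by
    rw [← sOp_prodOneAdd (p := p+1) hq le_rfl, hsucc, sOp_mul, sOp_oneAdd,
      Equiv.swap_apply_right, mul_comm]
  rw [ddiffNum, sOp_mul]
  linear_combination (-sOp p (hsym q p m)) * hswapped - prodOneAdd q (p+1) * mul_sub_hsym hq m
    - hsym q p m * hsucc

def VanishesBelow (F : R) (k : ℤ) : Prop := ∀ d, (degSum d : ℤ) < k → coeff d F = 0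

lemma VanishesBelow.mul_left {F : R} {k : ℤ} (h : VanishesBelow F k) (G : R) :
    VanishesBelow (G * F) k := by
  intro d hd
  rw [coeff_mul]
  refine Finset.sum_eq_zero fun x hx => ?_
  have hle : degSum x.2 ≤ degSum d := by
    rw [← Finset.HasAntidiagonal.mem_antidiagonal.mp hx]
    exact le_add_self.trans_eq (map_add degree x.1 x.2).symm
  rw [h x.2 (by omega), mul_zero]

lemma vanishesBelow_hsym (q p : ℕ) (j : ℤ) : VanishesBelow (hsym q p j) j := by
  intro d hd
  rw [coeff_hsym, if_neg fun h => by omega]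

lemma vanishesBelow_Gsk (p q : ℕ) (m : ℤ) : VanishesBelow (Gsk p q m) m := by
  intro d hd
  change Gsk p q m d = 0
  dsimp only [Gsk]
  rw [Int.toNat_of_nonpos (by omega), Finset.sum_range_one, pow_zero, one_mul, Nat.cast_zero,
    add_zero, ((vanishesBelow_hsym q p m).mul_left _) d hd]

section Summation

variable [TopologicalSpace A]

lemma continuous_sOp (i : ℕ) : Continuous (sOp i) :=
  continuous_pi fun _ => continuous_apply _

lemma hasSum_of_coeff_eq_sum {F : ℕ → R} {f : R} {m : ℤ} (hF : ∀ s, VanishesBelow (F s) (m + s))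
    (hf : ∀ d, coeff d f = ∑ s ∈ Finset.range (((degSum d : ℤ) - m).toNat + 1), coeff d (F s)) :
    HasSum F f := by
  refine MvPowerSeries.WithPiTopology.hasSum_iff_hasSum_coeff.mpr fun d => ?_
  rw [hf d]
  refine hasSum_sum_of_ne_finset_zero fun s hs => hF s d ?_
  rw [Finset.mem_range, not_lt] at hs
  omega

lemma hasSum_Gsk (p q : ℕ) (m : ℤ) :
    HasSum (fun s : ℕ => C ((-Polynomial.X) ^ s) * (prodOneAdd q p * hsym q p (m + s)))
      (Gsk p q m) :=
  hasSum_of_coeff_eq_sum (fun s => ((vanishesBelow_hsym q p _).mul_left _).mul_left _)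
    fun d => by simp only [coeff_C_mul]; rfl

lemma hasSum_JT (p q : ℕ) (c m : ℤ) :
    HasSum (fun s : ℕ => C ((intChoose c s : A) * Polynomial.X ^ s) * Gsk p q (m + s))
      (JT p q c m) :=
  hasSum_of_coeff_eq_sum (fun s => (vanishesBelow_Gsk p q _).mul_left _)
    fun d => by simp only [coeff_C_mul]; rfl

lemma HasSum.sOp {F : ℕ → R} {f : R} (hF : HasSum F f) (i : ℕ) :
    HasSum (fun s => sOp i (F s)) (sOp i f) := by
  have hcont : Continuous (rename (R := A) (Equiv.swap i (i+1))) := by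
    simpa only [funext (sOp_eq_rename i)] using continuous_sOp i
  simp only [sOp_eq_rename]
  exact hF.map _ hcont

variable [T2Space A]

lemma sOp_eq_of_hasSum {F : ℕ → R} {f : R} (hF : HasSum F f) {i : ℕ}
    (h : ∀ s, sOp i (F s) = F s) : sOp i f = f :=
  (hF.sOp i).unique (by simpa only [h] using hF)

variable [IsTopologicalRing A]

lemma ddiffNum_eq_of_hasSum {F G : ℕ → R} {f g : R} (hF : HasSum F f) (hG : HasSum G g) {i : ℕ}
    (h : ∀ s, ddiffNum i (F s) = (Xv i - Xv (i+1)) * G s) :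
    ddiffNum i f = (Xv i - Xv (i+1)) * g := by
  have hnum : HasSum (fun s => ddiffNum i (F s)) (ddiffNum i f) :=
    (hF.mul_left _).sub ((hF.sOp i).mul_left _)
  exact hnum.unique (by simpa only [h] using hG.mul_left _)

end Summation

section Rows

variable {p q i : ℕ}

lemma sOp_Gsk (hq : q ≤ i) (hp : i + 1 ≤ p) (m : ℤ) : sOp i (Gsk p q m) = Gsk p q m := by
  let _ : TopologicalSpace A := ⊥
  have : DiscreteTopology A := ⟨rfl⟩
  exact sOp_eq_of_hasSum (hasSum_Gsk p q m) fun s => by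
    rw [sOp_mul, sOp_mul, sOp_C, sOp_prodOneAdd hq hp, sOp_hsym hq hp]

lemma sOp_JT (hq : q ≤ i) (hp : i + 1 ≤ p) (c m : ℤ) : sOp i (JT p q c m) = JT p q c m := by
  let _ : TopologicalSpace A := ⊥
  have : DiscreteTopology A := ⟨rfl⟩
  exact sOp_eq_of_hasSum (hasSum_JT p q c m) fun s => by rw [sOp_mul, sOp_C, sOp_Gsk hq hp]

lemma ddiffNum_Gsk (hq : q ≤ p) (m : ℤ) :
    ddiffNum p (Gsk p q m) = (Xv p - Xv (p+1)) * Gsk (p+1) q (m-1) := by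
  let _ : TopologicalSpace A := ⊥
  have : DiscreteTopology A := ⟨rfl⟩
  refine ddiffNum_eq_of_hasSum (hasSum_Gsk p q m) (hasSum_Gsk (p+1) q (m-1)) fun s => ?_
  rw [ddiffNum_mul_of_sOp_eq (sOp_C _ _), ddiffNum_prodOneAdd_mul_hsym hq, sub_add_eq_add_sub]
  ring

lemma ddiffNum_JT (hq : q ≤ p) (c m : ℤ) :
    ddiffNum p (JT p q c m) = (Xv p - Xv (p+1)) * JT (p+1) q c (m-1) := by
  let _ : TopologicalSpace A := ⊥
  have : DiscreteTopology A := ⟨rfl⟩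
  refine ddiffNum_eq_of_hasSum (hasSum_JT p q c m) (hasSum_JT (p+1) q c (m-1)) fun s => ?_
  rw [ddiffNum_mul_of_sOp_eq (sOp_C _ _), ddiffNum_Gsk hq, sub_add_eq_add_sub]
  ring

end Rows

lemma ddiffNum_det {n : Type*} [Fintype n] [DecidableEq n] (i : ℕ) (M : Matrix n n R) (k : n)
    (hM : ∀ l ≠ k, ∀ j, sOp i (M l j) = M l j) :
    ddiffNum i M.det = (M.updateRow k fun j => ddiffNum i (M k j)).det := by
  have hs : sOp i M.det = (M.updateRow k fun j => sOp i (M k j)).det := by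
    rw [sOp_eq_rename, ← AlgHom.coe_toRingHom, RingHom.map_det]
    congr 1
    ext l j
    rcases eq_or_ne l k with rfl | hl
    · simp [sOp_eq_rename]
    · simp [Matrix.updateRow_ne hl, ← sOp_eq_rename, hM l hl]
  have hrow : (fun j => ddiffNum i (M k j))
      = (1 + bR * Xv (i+1)) • M k + (-(1 + bR * Xv i)) • fun j => sOp i (M k j) := by
    ext1 j
    simp only [ddiffNum, Pi.add_apply, Pi.smul_apply, smul_eq_mul]
    ring
  rw [hrow, Matrix.det_updateRow_add, Matrix.det_updateRow_smul, Matrix.det_updateRow_smul,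
    Matrix.updateRow_eq_self, ← hs, ddiffNum]
  ring

lemma ddiff_det_eq {n : Type*} [Fintype n] [DecidableEq n] {i : ℕ} {M M' : Matrix n n R} (k : n)
    (hM : ∀ l ≠ k, ∀ j, sOp i (M l j) = M l j) (hM' : ∀ l ≠ k, M' l = M l)
    (hk : ∀ j, ddiffNum i (M k j) = (Xv i - Xv (i+1)) * M' k j) :
    ddiff i M.det = M'.det := by
  refine ddiff_eq_of_mul_eq ?_
  have hupdate : M'.updateRow k ((Xv i - Xv (i+1)) • M' k)
      = M.updateRow k fun j => ddiffNum i (M k j) := by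
    ext l j
    rcases eq_or_ne l k with rfl | hl
    · simp [hk]
    · simp [Matrix.updateRow_ne hl, hM' l hl]
  rw [ddiffNum_det i M k hM, ← hupdate, Matrix.det_updateRow_smul, Matrix.updateRow_eq_self]

theorem stmt5_general (r : ℕ) (hr : 0 < r) (lam f : Fin r → ℕ)
    (hlam_pos : ∀ i, 0 < lam i)
    (hf_mono : ∀ i j : Fin r, i ≤ j → f i ≤ f j) (hf_pos : ∀ i, 0 < f i)
    (hf1 : ∀ h : 1 < r, f ⟨0, hr⟩ < f ⟨1, h⟩) :
    ddiff (f ⟨0, hr⟩) (Gtilde r lam f) =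
      Gtilde r (Function.update lam ⟨0, hr⟩ (lam ⟨0, hr⟩ - 1))
        (Function.update f ⟨0, hr⟩ (f ⟨0, hr⟩ + 1)) := by
  set i0 : Fin r := ⟨0, hr⟩
  have hrows : ∀ i ≠ i0, f i0 + 1 ≤ f i := fun i hi => by
    have hi : 1 ≤ (i : ℕ) := Nat.one_le_iff_ne_zero.mpr fun h => hi (Fin.ext h)
    exact (hf1 (hi.trans_lt i.2)).trans_le (hf_mono _ _ (Fin.le_def.mpr hi))
  refine ddiff_det_eq i0 (fun i hi j => sOp_JT (hf_pos i0) (hrows i hi) _ _)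
    (fun i hi => ?_) fun j => ?_
  · ext j
    simp [Function.update_of_ne hi]
  · simp only [Matrix.of_apply, Function.update_self, ddiffNum_JT (hf_pos i0)]
    congr 2
    push_cast [Nat.cast_sub (hlam_pos i0)]
    ring

theorem stmt5 (r : ℕ) (hr : 0 < r) (lam f : Fin r → ℕ)
    (hlam_anti : ∀ i j : Fin r, i ≤ j → lam j ≤ lam i) (hlam_pos : ∀ i, 0 < lam i)
    (hf_mono : ∀ i j : Fin r, i ≤ j → f i ≤ f j) (hf_pos : ∀ i, 0 < f i)
    (hlam1 : ∀ h : 1 < r, lam ⟨1, h⟩ < lam ⟨0, hr⟩)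
    (hf1 : ∀ h : 1 < r, f ⟨0, hr⟩ < f ⟨1, h⟩) :
    ddiff (f ⟨0, hr⟩) (Gtilde r lam f) =
      Gtilde r (Function.update lam ⟨0, hr⟩ (lam ⟨0, hr⟩ - 1))
        (Function.update f ⟨0, hr⟩ (f ⟨0, hr⟩ + 1)) :=
  stmt5_general r hr lam f hlam_pos hf_mono hf_pos hf1

end
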